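/- The sets D₁ = {(0,0,0), (0,1,1), (1,1,0), (1,2,1)} and D₂ = {(0,0,0), (0,1,0), (1,1,1), (1,2,1)} in ℤ³ are both integrally convex, but their intersection D₁ ∩ D₂ = {(0,0,0), (1,2,1)} is not an integrally convex set. Consequently, the sum of the indicator functions δ_{D₁} + δ_{D₂} is a sum of two integrally convex functions that is not integrally convex. -/

import Mathlib

open scoped BigOperators

noncomputable section

variable {ι : Type*} [Fintype ι]

/-- Embedding of integer vectors into real vectors. -/
def embedZ (z : ι → ℤ) : ι → ℝ := fun i => (z i : ℝ)

/-- The integral neighborhood `N(x)` of a real vector `x`. -/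
def IntNbhd (x : ι → ℝ) : Set (ι → ℤ) := {z | ∀ i, |x i - (z i : ℝ)| < 1}

/-- A set `S ⊆ ℤ^ι` is integrally convex if every point `x` of its convex hull
belongs to the convex hull of `S ∩ N(x)`. -/
def IntegrallyConvexSet (S : Set (ι → ℤ)) : Prop :=
  ∀ x ∈ convexHull ℝ (embedZ '' S), x ∈ convexHull ℝ (embedZ '' (S ∩ IntNbhd x))

/-- The local convex extension `f̃` of `f : ℤ^ι → ℝ ∪ {+∞}`. -/
def LocalConvexExt (f : (ι → ℤ) → EReal) (x : ι → ℝ) : EReal :=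
  sInf {v : EReal | ∃ (A : Finset (ι → ℤ)) (lam : (ι → ℤ) → ℝ),
    (∀ z ∈ A, z ∈ IntNbhd x) ∧ (∀ z ∈ A, 0 ≤ lam z) ∧
    (∑ z ∈ A, lam z) = 1 ∧ (∀ i, (∑ z ∈ A, lam z * (z i : ℝ)) = x i) ∧
    v = ∑ z ∈ A, ((lam z : EReal) * f z)}

/-- A function `f : ℤ^ι → ℝ ∪ {+∞}` is integrally convex if its local convex
extension is a convex function on `ℝ^ι`. -/
def IntegrallyConvexFn (f : (ι → ℤ) → EReal) : Prop :=
  ∀ x y : ι → ℝ, ∀ a b : ℝ, 0 ≤ a → 0 ≤ b → a + b = 1 →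
    LocalConvexExt f (a • x + b • y) ≤
      (a : EReal) * LocalConvexExt f x + (b : EReal) * LocalConvexExt f y

/-- Componentwise rounded-up midpoint `⌈(x+y)/2⌉` of two integer vectors. -/
def midUp (x y : ι → ℤ) : ι → ℤ := fun i => ⌈((x i + y i : ℤ) : ℚ) / 2⌉

/-- Componentwise rounded-down midpoint `⌊(x+y)/2⌋` of two integer vectors. -/
def midDown (x y : ι → ℤ) : ι → ℤ := fun i => ⌊((x i + y i : ℤ) : ℚ) / 2⌋

/-- A set `S ⊆ ℤ^ι` is discrete midpoint convex if for all `x, y ∈ S` with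
`‖x - y‖∞ ≥ 2`, both `⌈(x+y)/2⌉` and `⌊(x+y)/2⌋` belong to `S`. -/
def DiscreteMidpointConvexSet (S : Set (ι → ℤ)) : Prop :=
  ∀ x ∈ S, ∀ y ∈ S, (∃ i, 2 ≤ |x i - y i|) → midUp x y ∈ S ∧ midDown x y ∈ S

/-- Globally discrete midpoint convex function: discrete midpoint convexity for
all pairs with `‖x - y‖∞ ≥ 2`. -/
def GloballyDMC (f : (ι → ℤ) → EReal) : Prop :=
  ∀ x y : ι → ℤ, (∃ i, 2 ≤ |x i - y i|) →
    f (midUp x y) + f (midDown x y) ≤ f x + f y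

/-- Locally discrete midpoint convex function: effective domain is a discrete
midpoint convex set, and discrete midpoint convexity holds whenever `‖x - y‖∞ = 2`. -/
def LocallyDMC (f : (ι → ℤ) → EReal) : Prop :=
  DiscreteMidpointConvexSet {x | f x ≠ ⊤} ∧
  ∀ x y : ι → ℤ, (∀ i, |x i - y i| ≤ 2) → (∃ i, |x i - y i| = 2) →
    f (midUp x y) + f (midDown x y) ≤ f x + f y

/-- An integer interval (box) `B = [a, b] ∩ ℤ^ι` with bounds
`a ∈ (ℤ ∪ {-∞})^ι`, `b ∈ (ℤ ∪ {+∞})^ι`, `a ≤ b`. -/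
def IsIntegerInterval (B : Set (ι → ℤ)) : Prop :=
  ∃ a b : ι → EReal,
    (∀ i, a i = ⊥ ∨ ∃ k : ℤ, a i = ((k : ℝ) : EReal)) ∧
    (∀ i, b i = ⊤ ∨ ∃ k : ℤ, b i = ((k : ℝ) : EReal)) ∧
    (∀ i, a i ≤ b i) ∧
    B = {x | ∀ i, a i ≤ ((x i : ℝ) : EReal) ∧ ((x i : ℝ) : EReal) ≤ b i}

/-- Separable convex function: a sum of univariate discrete convex functions. -/
def SeparableConvex (φ : (ι → ℤ) → EReal) : Prop :=
  ∃ φi : ι → ℤ → EReal,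
    (∀ i t, φi i t ≠ ⊥) ∧
    (∀ i t, 2 * φi i t ≤ φi i (t - 1) + φi i (t + 1)) ∧
    (∀ x, φ x = ∑ i, φi i (x i))


/-! The local convex extension of `δ_S` is `0` at the points `x` lying in the convex hull of
`S ∩ N(x)` and `+∞` elsewhere. Hence it is convex exactly when `S` is integrally convex, and
`δ_{D₁} + δ_{D₂} = δ_{D₁ ∩ D₂}` reduces the statement about functions to the one about sets.

Both `Dᵢ` are unit parallelograms `{0, u, v, u + v}` with `u, v ∈ {0, 1}³`. Cutting such a
parallelogram along the diagonal from `u` to `v` writes every point of its hull as a convex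
combination of vertices at `ℓ∞`-distance `< 1`. The intersection `{0, (1,2,1)}` is not integrally
convex: no point of it lies in the integral neighbourhood of its midpoint `(1/2, 1, 1/2)`. -/

lemma Finset.sum_smul_mem_convexHull_of_weight_ne_zero {ι' E : Type*} [AddCommGroup E] [Module ℝ E]
    {s : Set E} {x : E} (t : Finset ι') {w : ι' → ℝ} {z : ι' → E} (hw0 : ∀ i ∈ t, 0 ≤ w i)
    (hw1 : ∑ i ∈ t, w i = 1) (hz : ∀ i ∈ t, w i ≠ 0 → z i ∈ s) (hx : ∑ i ∈ t, w i • z i = x) :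
    x ∈ convexHull ℝ s := by
  classical
  rw [← hx, ← Finset.centerMass_eq_of_sum_1 _ _ hw1, ← Finset.centerMass_filter_ne_zero]
  refine Finset.centerMass_mem_convexHull _ (fun i hi => hw0 i (Finset.mem_filter.1 hi).1) ?_
    (fun i hi => hz i (Finset.mem_filter.1 hi).1 (Finset.mem_filter.1 hi).2)
  rw [Finset.sum_filter_ne_zero, hw1]
  exact one_pos

section

variable {κ : Type*}

-- `δ_S` in the notation of the paper.
open Classical in
def convexIndicator (S : Set (κ → ℤ)) (z : κ → ℤ) : EReal := if z ∈ S then 0 else ⊤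

@[simp]
lemma convexIndicator_of_mem {S : Set (κ → ℤ)} {z : κ → ℤ} (hz : z ∈ S) :
    convexIndicator S z = 0 := by
  simp [convexIndicator, hz]

@[simp]
lemma convexIndicator_of_notMem {S : Set (κ → ℤ)} {z : κ → ℤ} (hz : z ∉ S) :
    convexIndicator S z = ⊤ := by
  simp [convexIndicator, hz]

lemma convexIndicator_nonneg (S : Set (κ → ℤ)) (z : κ → ℤ) : 0 ≤ convexIndicator S z := by
  by_cases hz : z ∈ S <;> simp [hz]

lemma eq_convexIndicator {S : Set (κ → ℤ)} {f : (κ → ℤ) → EReal}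
    (hin : ∀ z ∈ S, f z = 0) (hout : ∀ z, z ∉ S → f z = ⊤) : f = convexIndicator S := by
  funext z
  by_cases hz : z ∈ S
  · rw [hin z hz, convexIndicator_of_mem hz]
  · rw [hout z hz, convexIndicator_of_notMem hz]

lemma convexIndicator_add_convexIndicator (S T : Set (κ → ℤ)) (z : κ → ℤ) :
    convexIndicator S z + convexIndicator T z = convexIndicator (S ∩ T) z := by
  by_cases hS : z ∈ S <;> by_cases hT : z ∈ T <;> simp [hS, hT]

lemma embedZ_injective : Function.Injective (embedZ : (κ → ℤ) → κ → ℝ) :=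
  fun _ _ h => funext fun i => by simpa [embedZ] using congrFun h i

@[simp]
lemma embedZ_zero : embedZ (0 : κ → ℤ) = 0 := by
  funext i
  simp [embedZ]

@[simp]
lemma embedZ_add (z w : κ → ℤ) : embedZ (z + w) = embedZ z + embedZ w := by
  funext i
  simp [embedZ]

lemma mem_intNbhd_embedZ (z : κ → ℤ) : z ∈ IntNbhd (embedZ z) := by
  intro i; simp [embedZ]

lemma mem_convexHull_embedZ_of_combination {T : Set (κ → ℤ)} {x : κ → ℝ} {A : Finset (κ → ℤ)}
    {lam : (κ → ℤ) → ℝ} (hT : ∀ z ∈ A, lam z ≠ 0 → z ∈ T) (h0 : ∀ z ∈ A, 0 ≤ lam z)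
    (h1 : ∑ z ∈ A, lam z = 1) (hx : ∀ i, ∑ z ∈ A, lam z * (z i : ℝ) = x i) :
    x ∈ convexHull ℝ (embedZ '' T) := by
  refine A.sum_smul_mem_convexHull_of_weight_ne_zero h0 h1
    (fun z hz hlz => Set.mem_image_of_mem _ (hT z hz hlz)) ?_
  funext i
  simpa [embedZ] using hx i

lemma exists_combination_of_mem_convexHull_embedZ {T : Set (κ → ℤ)} {x : κ → ℝ}
    (hx : x ∈ convexHull ℝ (embedZ '' T)) :
    ∃ (A : Finset (κ → ℤ)) (lam : (κ → ℤ) → ℝ), ↑A ⊆ T ∧ (∀ z ∈ A, 0 ≤ lam z) ∧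
      ∑ z ∈ A, lam z = 1 ∧ ∀ i, ∑ z ∈ A, lam z * (z i : ℝ) = x i := by
  classical
  rw [convexHull_eq_union_convexHull_finite_subsets, Set.mem_iUnion₂] at hx
  obtain ⟨t, ht, hxt⟩ := hx
  obtain ⟨A, hAT, rfl⟩ := Finset.subset_set_image_iff.1 ht
  obtain ⟨w, hw0, hw1, rfl⟩ := Finset.mem_convexHull'.1 hxt
  have hinj : Set.InjOn embedZ (A : Set (κ → ℤ)) := embedZ_injective.injOn
  refine ⟨A, w ∘ embedZ, hAT, fun z hz => hw0 _ (Finset.mem_image_of_mem _ hz), ?_, fun i => ?_⟩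
  · rwa [Finset.sum_image hinj] at hw1
  · rw [Finset.sum_apply, Finset.sum_image hinj]
    simp [embedZ]

lemma mem_of_sum_mul_convexIndicator_ne_top {S : Set (κ → ℤ)} {A : Finset (κ → ℤ)}
    {lam : (κ → ℤ) → ℝ} (h0 : ∀ z ∈ A, 0 ≤ lam z)
    (h : ∑ z ∈ A, (lam z : EReal) * convexIndicator S z ≠ ⊤) :
    ∀ z ∈ A, lam z ≠ 0 → z ∈ S := by
  intro z hz hlz
  by_contra hzS
  refine h (top_le_iff.1 ?_)
  calc ⊤ = (lam z : EReal) * convexIndicator S z := by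
        rw [convexIndicator_of_notMem hzS,
          EReal.mul_top_of_pos (EReal.coe_pos.2 ((h0 z hz).lt_of_ne' hlz))]
    _ ≤ ∑ w ∈ A, (lam w : EReal) * convexIndicator S w :=
        Finset.single_le_sum (f := fun w => (lam w : EReal) * convexIndicator S w)
          (fun w hw => mul_nonneg (EReal.coe_nonneg.2 (h0 w hw)) (convexIndicator_nonneg S w)) hz

open Classical in
lemma localConvexExt_convexIndicator_eq (S : Set (κ → ℤ)) (x : κ → ℝ) :
    LocalConvexExt (convexIndicator S) x =
      if x ∈ convexHull ℝ (embedZ '' (S ∩ IntNbhd x)) then 0 else ⊤ := by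
  split_ifs with hx
  · obtain ⟨A, lam, hA, h0, h1, hxA⟩ := exists_combination_of_mem_convexHull_embedZ hx
    refine le_antisymm (sInf_le ⟨A, lam, fun z hz => (hA hz).2, h0, h1, hxA, ?_⟩) ?_
    · exact (Finset.sum_eq_zero fun z hz => by rw [convexIndicator_of_mem (hA hz).1, mul_zero]).symm
    · refine le_sInf ?_
      rintro _ ⟨A, lam, -, h0, -, -, rfl⟩
      exact Finset.sum_nonneg fun z hz =>
        mul_nonneg (EReal.coe_nonneg.2 (h0 z hz)) (convexIndicator_nonneg S z)
  · refine sInf_eq_top.2 ?_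
    rintro _ ⟨A, lam, hN, h0, h1, hxA, rfl⟩
    by_contra hne
    have hS := mem_of_sum_mul_convexIndicator_ne_top h0 hne
    exact hx (mem_convexHull_embedZ_of_combination (fun z hz hlz => ⟨hS z hz hlz, hN z hz⟩)
      h0 h1 hxA)

lemma localConvexExt_convexIndicator_of_mem {S : Set (κ → ℤ)} {z : κ → ℤ} (hz : z ∈ S) :
    LocalConvexExt (convexIndicator S) (embedZ z) = 0 := by
  rw [localConvexExt_convexIndicator_eq, if_pos]
  exact subset_convexHull ℝ _ (Set.mem_image_of_mem _ ⟨hz, mem_intNbhd_embedZ z⟩)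

lemma localConvexExt_convexIndicator_nonneg (S : Set (κ → ℤ)) (x : κ → ℝ) :
    0 ≤ LocalConvexExt (convexIndicator S) x := by
  rw [localConvexExt_convexIndicator_eq]
  split_ifs <;> simp

open Classical in
lemma IntegrallyConvexSet.localConvexExt_convexIndicator {S : Set (κ → ℤ)}
    (hS : IntegrallyConvexSet S) (x : κ → ℝ) :
    LocalConvexExt (convexIndicator S) x = if x ∈ convexHull ℝ (embedZ '' S) then 0 else ⊤ := by
  rw [localConvexExt_convexIndicator_eq]
  by_cases hx : x ∈ convexHull ℝ (embedZ '' S)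
  · rw [if_pos (hS x hx), if_pos hx]
  · rw [if_neg hx, if_neg fun h => hx (convexHull_mono (Set.image_mono Set.inter_subset_left) h)]

lemma IntegrallyConvexSet.integrallyConvexFn_convexIndicator {S : Set (κ → ℤ)}
    (hS : IntegrallyConvexSet S) : IntegrallyConvexFn (convexIndicator S) := by
  intro x y a b ha hb hab
  rcases ha.eq_or_lt with rfl | ha
  · simp [show b = 1 by linarith]
  rcases hb.eq_or_lt with rfl | hb
  · simp [show a = 1 by linarith]
  have hnonneg : ∀ (c : ℝ) (y), 0 ≤ c → (c : EReal) * LocalConvexExt (convexIndicator S) y ≠ ⊥ :=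
    fun c y hc => (EReal.bot_lt_zero.trans_le
      (mul_nonneg (EReal.coe_nonneg.2 hc) (localConvexExt_convexIndicator_nonneg S y))).ne'
  by_cases hxy : x ∈ convexHull ℝ (embedZ '' S) ∧ y ∈ convexHull ℝ (embedZ '' S)
  · simp [hS.localConvexExt_convexIndicator, hxy.1, hxy.2,
      convex_convexHull ℝ _ hxy.1 hxy.2 ha.le hb.le hab]
  refine le_of_le_of_eq le_top ?_
  rcases not_and_or.1 hxy with hx | hy
  · rw [hS.localConvexExt_convexIndicator x, if_neg hx, EReal.mul_top_of_pos (EReal.coe_pos.2 ha),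
      EReal.top_add_of_ne_bot (hnonneg b y hb.le)]
  · rw [hS.localConvexExt_convexIndicator y, if_neg hy, EReal.mul_top_of_pos (EReal.coe_pos.2 hb),
      EReal.add_top_of_ne_bot (hnonneg a x ha.le)]

lemma integrallyConvexSet_of_integrallyConvexFn_convexIndicator {S : Set (κ → ℤ)}
    (hf : IntegrallyConvexFn (convexIndicator S)) : IntegrallyConvexSet S := by
  set C := {x | LocalConvexExt (convexIndicator S) x = 0}
  have hC : Convex ℝ C := by
    intro x hx y hy a b ha hb hab
    refine le_antisymm ?_ ?_
    · simpa [hx.out, hy.out] using hf x y a b ha hb hab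
    · exact localConvexExt_convexIndicator_nonneg S _
  have hSC : embedZ '' S ⊆ C := by
    rintro _ ⟨z, hz, rfl⟩
    exact localConvexExt_convexIndicator_of_mem hz
  intro x hx
  have hxC : LocalConvexExt (convexIndicator S) x = 0 := convexHull_min hSC hC hx
  rw [localConvexExt_convexIndicator_eq] at hxC
  by_contra h
  simp [h] at hxC

theorem integrallyConvexFn_convexIndicator_iff {S : Set (κ → ℤ)} :
    IntegrallyConvexFn (convexIndicator S) ↔ IntegrallyConvexSet S :=
  ⟨integrallyConvexSet_of_integrallyConvexFn_convexIndicator,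
    IntegrallyConvexSet.integrallyConvexFn_convexIndicator⟩

lemma IntegrallyConvexSet.nonempty_inter_intNbhd {S : Set (κ → ℤ)}
    (hS : IntegrallyConvexSet S) {x : κ → ℝ} (hx : x ∈ convexHull ℝ (embedZ '' S)) :
    (S ∩ IntNbhd x).Nonempty := by
  by_contra h
  simpa [Set.not_nonempty_iff_eq_empty.1 h] using hS x hx

theorem not_integrallyConvexSet_pair {p q : κ → ℤ} {i : κ} (h : q i = p i + 2) :
    ¬IntegrallyConvexSet ({p, q} : Set (κ → ℤ)) := by
  intro hS
  have hmid : midpoint ℝ (embedZ p) (embedZ q) ∈ convexHull ℝ (embedZ '' {p, q}) :=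
    segment_subset_convexHull (Set.mem_image_of_mem embedZ (Set.mem_insert p {q}))
      (Set.mem_image_of_mem embedZ (Set.mem_insert_of_mem p rfl))
      (midpoint_mem_segment (𝕜 := ℝ) (embedZ p) (embedZ q))
  obtain ⟨z, hz, hzN⟩ := hS.nonempty_inter_intNbhd hmid
  have hmid_i : midpoint ℝ (embedZ p) (embedZ q) i = p i + 1 := by
    simp only [midpoint_eq_smul_add, invOf_eq_inv, Pi.smul_apply, Pi.add_apply, embedZ, h]
    push_cast
    ring
  have hi := hzN i
  rw [hmid_i] at hi
  rcases hz with rfl | rfl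
  · simp at hi
  · rw [h] at hi
    push_cast at hi
    norm_num at hi

section Parallelogram

variable {u v : κ → ℤ} {s t : ℝ}

lemma zero_mem_intNbhd_parallelogram (hu : ∀ i, u i = 0 ∨ u i = 1) (hv : ∀ i, v i = 0 ∨ v i = 1)
    (hs : 0 ≤ s) (ht : 0 ≤ t) (hst : s + t < 1) :
    0 ∈ IntNbhd (s • embedZ u + t • embedZ v) := by
  intro i
  rcases hu i with h | h <;> rcases hv i with h' | h' <;> simp [embedZ, h, h'] <;>
    rw [abs_lt] <;> constructor <;> linarith

lemma left_mem_intNbhd_parallelogram (hu : ∀ i, u i = 0 ∨ u i = 1) (hv : ∀ i, v i = 0 ∨ v i = 1)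
    (hs : 0 < s) (hs1 : s ≤ 1) (ht : 0 ≤ t) (ht1 : t < 1) :
    u ∈ IntNbhd (s • embedZ u + t • embedZ v) := by
  intro i
  rcases hu i with h | h <;> rcases hv i with h' | h' <;> simp [embedZ, h, h'] <;>
    rw [abs_lt] <;> constructor <;> linarith

lemma add_mem_intNbhd_parallelogram (hu : ∀ i, u i = 0 ∨ u i = 1) (hv : ∀ i, v i = 0 ∨ v i = 1)
    (hs1 : s ≤ 1) (ht1 : t ≤ 1) (hst : 1 < s + t) :
    u + v ∈ IntNbhd (s • embedZ u + t • embedZ v) := by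
  intro i
  rcases hu i with h | h <;> rcases hv i with h' | h' <;> simp [embedZ, h, h'] <;>
    rw [abs_lt] <;> constructor <;> linarith

lemma mem_convexHull_inter_intNbhd_parallelogram (hu : ∀ i, u i = 0 ∨ u i = 1)
    (hv : ∀ i, v i = 0 ∨ v i = 1) (hs : 0 ≤ s) (hs1 : s ≤ 1) (ht : 0 ≤ t) (ht1 : t ≤ 1) :
    s • embedZ u + t • embedZ v ∈ convexHull ℝ
      (embedZ '' ({0, u, v, u + v} ∩ IntNbhd (s • embedZ u + t • embedZ v))) := by
  set x := s • embedZ u + t • embedZ v with hx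
  have hvN : 0 < t → s < 1 → v ∈ IntNbhd x := fun ht' hs' => by
    rw [hx, add_comm]
    exact left_mem_intNbhd_parallelogram hv hu ht' ht1 hs hs'
  rcases le_or_gt (s + t) 1 with hst | hst
  · refine Finset.sum_smul_mem_convexHull_of_weight_ne_zero Finset.univ (w := ![1 - s - t, s, t])
      (z := fun k => embedZ (![0, u, v] k)) ?_ ?_ ?_ ?_
    · intro k _
      fin_cases k <;> simp <;> linarith
    · simp [Fin.sum_univ_three]
      ring
    · intro k _ hk
      refine Set.mem_image_of_mem _ ⟨by fin_cases k <;> simp, ?_⟩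
      fin_cases k <;> simp only [Fin.zero_eta, Fin.mk_one, Fin.reduceFinMk, Matrix.cons_val] at hk ⊢
      · have hst' : s + t < 1 := lt_of_le_of_ne hst fun h => hk (by linarith)
        exact zero_mem_intNbhd_parallelogram hu hv hs ht hst'
      · have hs' : 0 < s := hs.lt_of_ne' hk
        exact left_mem_intNbhd_parallelogram hu hv hs' hs1 ht (by linarith)
      · exact hvN (ht.lt_of_ne' hk) (by linarith [ht.lt_of_ne' hk])
    · funext i
      simp [Fin.sum_univ_three, embedZ, x]
  · refine Finset.sum_smul_mem_convexHull_of_weight_ne_zero Finset.univ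
      (w := ![1 - t, 1 - s, s + t - 1]) (z := fun k => embedZ (![u, v, u + v] k)) ?_ ?_ ?_ ?_
    · intro k _
      fin_cases k <;> simp <;> linarith
    · simp [Fin.sum_univ_three]
      ring
    · intro k _ hk
      refine Set.mem_image_of_mem _ ⟨by fin_cases k <;> simp, ?_⟩
      fin_cases k <;> simp only [Fin.zero_eta, Fin.mk_one, Fin.reduceFinMk, Matrix.cons_val] at hk ⊢
      · have ht' : t < 1 := lt_of_le_of_ne ht1 fun h => hk (by linarith)
        exact left_mem_intNbhd_parallelogram hu hv (by linarith) hs1 ht ht'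
      · have hs' : s < 1 := lt_of_le_of_ne hs1 fun h => hk (by linarith)
        exact hvN (by linarith) hs'
      · exact add_mem_intNbhd_parallelogram hu hv hs1 ht1 hst
    · funext i
      simp [Fin.sum_univ_three, embedZ, x]
      ring

open Pointwise in
theorem integrallyConvexSet_parallelogram (hu : ∀ i, u i = 0 ∨ u i = 1)
    (hv : ∀ i, v i = 0 ∨ v i = 1) : IntegrallyConvexSet ({0, u, v, u + v} : Set (κ → ℤ)) := by
  have hP : convexHull ℝ (embedZ '' {0, u, v, u + v}) ⊆
      segment ℝ 0 (embedZ u) + segment ℝ 0 (embedZ v) := by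
    refine convexHull_min ?_ ((convex_segment _ _).add (convex_segment _ _))
    rintro _ ⟨z, hz, rfl⟩
    have h0u := left_mem_segment ℝ 0 (embedZ u)
    have h0v := left_mem_segment ℝ 0 (embedZ v)
    have hu1 := right_mem_segment ℝ 0 (embedZ u)
    have hv1 := right_mem_segment ℝ 0 (embedZ v)
    rcases hz with rfl | rfl | rfl | rfl
    · simpa using Set.add_mem_add h0u h0v
    · simpa using Set.add_mem_add hu1 h0v
    · simpa using Set.add_mem_add h0u hv1
    · simpa using Set.add_mem_add hu1 hv1
  intro x hx
  obtain ⟨_, ha, _, hb, rfl⟩ := hP hx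
  rw [segment_eq_image'] at ha hb
  obtain ⟨s, ⟨hs, hs1⟩, rfl⟩ := ha
  obtain ⟨t, ⟨ht, ht1⟩, rfl⟩ := hb
  simpa using mem_convexHull_inter_intNbhd_parallelogram hu hv hs hs1 ht ht1

end Parallelogram

end

def D₁ : Set (Fin 3 → ℤ) := {![0,0,0], ![0,1,1], ![1,1,0], ![1,2,1]}

def D₂ : Set (Fin 3 → ℤ) := {![0,0,0], ![0,1,0], ![1,1,1], ![1,2,1]}

lemma integrallyConvexSet_D₁ : IntegrallyConvexSet D₁ := by
  have h := integrallyConvexSet_parallelogram (u := ![0,1,1]) (v := ![1,1,0])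
    (by decide) (by decide)
  rwa [show (![0,1,1] + ![1,1,0] : Fin 3 → ℤ) = ![1,2,1] by decide,
    show (0 : Fin 3 → ℤ) = ![0,0,0] by decide] at h

lemma integrallyConvexSet_D₂ : IntegrallyConvexSet D₂ := by
  have h := integrallyConvexSet_parallelogram (u := ![0,1,0]) (v := ![1,1,1])
    (by decide) (by decide)
  rwa [show (![0,1,0] + ![1,1,1] : Fin 3 → ℤ) = ![1,2,1] by decide,
    show (0 : Fin 3 → ℤ) = ![0,0,0] by decide] at h

lemma D₁_inter_D₂ : D₁ ∩ D₂ = {![0,0,0], ![1,2,1]} := by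
  have h : ({![0,0,0], ![0,1,1], ![1,1,0], ![1,2,1]} ∩ {![0,0,0], ![0,1,0], ![1,1,1], ![1,2,1]} :
      Finset (Fin 3 → ℤ)) = {![0,0,0], ![1,2,1]} := by decide
  simpa only [D₁, D₂, Finset.coe_inter, Finset.coe_insert, Finset.coe_singleton] using
    congrArg ((↑) : Finset (Fin 3 → ℤ) → Set (Fin 3 → ℤ)) h

lemma not_integrallyConvexSet_D₁_inter_D₂ : ¬IntegrallyConvexSet (D₁ ∩ D₂) := by
  rw [D₁_inter_D₂]
  exact not_integrallyConvexSet_pair (i := 1) (by decide)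

/-- `D₁` and `D₂` are integrally convex but their intersection is
not; correspondingly the sum of their indicator functions is a sum of two
integrally convex functions that is not integrally convex. -/
theorem sum_of_indicators_not_integrally_convex
    (δ1 δ2 : (Fin 3 → ℤ) → EReal)
    (h1in : ∀ x ∈ ({![0,0,0], ![0,1,1], ![1,1,0], ![1,2,1]} : Set (Fin 3 → ℤ)), δ1 x = 0)
    (h1out : ∀ x : Fin 3 → ℤ,
      x ∉ ({![0,0,0], ![0,1,1], ![1,1,0], ![1,2,1]} : Set (Fin 3 → ℤ)) → δ1 x = ⊤)
    (h2in : ∀ x ∈ ({![0,0,0], ![0,1,0], ![1,1,1], ![1,2,1]} : Set (Fin 3 → ℤ)), δ2 x = 0)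
    (h2out : ∀ x : Fin 3 → ℤ,
      x ∉ ({![0,0,0], ![0,1,0], ![1,1,1], ![1,2,1]} : Set (Fin 3 → ℤ)) → δ2 x = ⊤) :
    IntegrallyConvexSet ({![0,0,0], ![0,1,1], ![1,1,0], ![1,2,1]} : Set (Fin 3 → ℤ)) ∧
    IntegrallyConvexSet ({![0,0,0], ![0,1,0], ![1,1,1], ![1,2,1]} : Set (Fin 3 → ℤ)) ∧
    ({![0,0,0], ![0,1,1], ![1,1,0], ![1,2,1]} : Set (Fin 3 → ℤ)) ∩
        ({![0,0,0], ![0,1,0], ![1,1,1], ![1,2,1]} : Set (Fin 3 → ℤ)) =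
      ({![0,0,0], ![1,2,1]} : Set (Fin 3 → ℤ)) ∧
    ¬ IntegrallyConvexSet (({![0,0,0], ![0,1,1], ![1,1,0], ![1,2,1]} : Set (Fin 3 → ℤ)) ∩
        ({![0,0,0], ![0,1,0], ![1,1,1], ![1,2,1]} : Set (Fin 3 → ℤ))) ∧
    IntegrallyConvexFn δ1 ∧ IntegrallyConvexFn δ2 ∧
    ¬ IntegrallyConvexFn (fun x => δ1 x + δ2 x) := by
  have hδ1 : δ1 = convexIndicator D₁ := eq_convexIndicator h1in h1out
  have hδ2 : δ2 = convexIndicator D₂ := eq_convexIndicator h2in h2out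
  have hsum : (fun x => δ1 x + δ2 x) = convexIndicator (D₁ ∩ D₂) := by
    funext x
    rw [hδ1, hδ2, convexIndicator_add_convexIndicator]
  refine ⟨integrallyConvexSet_D₁, integrallyConvexSet_D₂, D₁_inter_D₂,
    not_integrallyConvexSet_D₁_inter_D₂, ?_, ?_, ?_⟩
  · rw [hδ1, integrallyConvexFn_convexIndicator_iff]
    exact integrallyConvexSet_D₁
  · rw [hδ2, integrallyConvexFn_convexIndicator_iff]
    exact integrallyConvexSet_D₂
  · rw [hsum, integrallyConvexFn_convexIndicator_iff]
    exact not_integrallyConvexSet_D₁_inter_D₂
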